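/- For α_1, α_2 ∈ C and x_1, x_2 ∈ C, setting α_± = (α_1 ± α_2)/2 and x_± = x_1 ± x_2, the product formula θ[α_1;0](x_1|τ)·θ[α_2;0](x_2|τ) = θ[α_+;0](x_+|2τ)·θ[α_−;0](x_−|2τ) + θ[α_+ + 1/2;0](x_+|2τ)·θ[α_− + 1/2;0](x_−|2τ) holds. -/

import Mathlib

/-!
Multiply the two defining series into a double series over `(n₁, n₂) ∈ ℤ²`. Splitting the
lattice according to the parity of `n₁ + n₂`, write `(n₁, n₂) = (m + k, m - k)` or
`(m + k + 1, m - k)`; since `(u + v)² + (u - v)² = 2u² + 2v²`, each term then factors as a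
product of a term of characteristic `α₊` (resp. `α₊ + 1/2`) in `m` and one of characteristic `α₋`
(resp. `α₋ + 1/2`) in `k`, both with modulus `2τ`.
-/

/-- The theta function with characteristics
`θ[α;β](z|τ) = Σ_{n∈ℤ} exp(πi(n+α)²τ + 2πi(n+α)(z+β))`. -/
noncomputable def thetaChar (τ α β z : ℂ) : ℂ :=
  ∑' n : ℤ, Complex.exp ((Real.pi : ℂ) * Complex.I * ((n : ℂ) + α) ^ 2 * τ
    + 2 * (Real.pi : ℂ) * Complex.I * ((n : ℂ) + α) * (z + β))

open Complex
open scoped Real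

noncomputable def thetaCharTerm (τ α w : ℂ) (n : ℤ) : ℂ :=
  exp (π * I * (n + α) ^ 2 * τ + 2 * π * I * (n + α) * w)

lemma thetaCharTerm_eq_mul_jacobiTheta₂_term (τ α w : ℂ) (n : ℤ) :
    thetaCharTerm τ α w n =
      exp (π * I * α ^ 2 * τ + 2 * π * I * α * w) * jacobiTheta₂_term n (w + α * τ) τ := by
  rw [thetaCharTerm, jacobiTheta₂_term, ← exp_add]
  ring_nf

lemma thetaCharTerm_add_one (τ α w : ℂ) (n : ℤ) :
    thetaCharTerm τ α w (n + 1) = thetaCharTerm τ (α + 1) w n := by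
  simp only [thetaCharTerm]
  push_cast
  ring_nf

lemma thetaCharTerm_add_mul_thetaCharTerm_sub (τ α₁ α₂ w₁ w₂ : ℂ) (m k : ℤ) :
    thetaCharTerm τ α₁ w₁ (m + k) * thetaCharTerm τ α₂ w₂ (m - k) =
      thetaCharTerm (2 * τ) ((α₁ + α₂) / 2) (w₁ + w₂) m
        * thetaCharTerm (2 * τ) ((α₁ - α₂) / 2) (w₁ - w₂) k := by
  simp only [thetaCharTerm, ← exp_add]
  push_cast
  ring_nf

lemma thetaCharTerm_add_add_one_mul_thetaCharTerm_sub (τ α₁ α₂ w₁ w₂ : ℂ) (m k : ℤ) :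
    thetaCharTerm τ α₁ w₁ (m + k + 1) * thetaCharTerm τ α₂ w₂ (m - k) =
      thetaCharTerm (2 * τ) ((α₁ + α₂) / 2 + 1 / 2) (w₁ + w₂) m
        * thetaCharTerm (2 * τ) ((α₁ - α₂) / 2 + 1 / 2) (w₁ - w₂) k := by
  rw [thetaCharTerm_add_one, thetaCharTerm_add_mul_thetaCharTerm_sub]
  ring_nf

section Summability

variable {τ : ℂ} (hτ : 0 < τ.im)
include hτ

lemma summable_thetaCharTerm (α w : ℂ) : Summable (thetaCharTerm τ α w) :=
  ((summable_jacobiTheta₂_term_iff (w + α * τ) τ).mpr hτ).mul_left _ |>.congr fun n =>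
    (thetaCharTerm_eq_mul_jacobiTheta₂_term τ α w n).symm

lemma hasSum_thetaCharTerm (α z : ℂ) : HasSum (thetaCharTerm τ α z) (thetaChar τ α 0 z) := by
  simpa only [thetaChar, thetaCharTerm, add_zero] using (summable_thetaCharTerm hτ α z).hasSum

lemma hasSum_thetaCharTerm_mul_thetaCharTerm (α₁ α₂ z₁ z₂ : ℂ) :
    HasSum (fun p : ℤ × ℤ => thetaCharTerm τ α₁ z₁ p.1 * thetaCharTerm τ α₂ z₂ p.2)
      (thetaChar τ α₁ 0 z₁ * thetaChar τ α₂ 0 z₂) :=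
  (hasSum_thetaCharTerm hτ α₁ z₁).mul (hasSum_thetaCharTerm hτ α₂ z₂) <|
    summable_mul_of_summable_norm (summable_norm_iff.mpr (summable_thetaCharTerm hτ α₁ z₁))
      (summable_norm_iff.mpr (summable_thetaCharTerm hτ α₂ z₂))

end Summability

lemma Int.range_add_sub :
    Set.range (fun p : ℤ × ℤ => (p.1 + p.2, p.1 - p.2)) = {q | Even (q.1 + q.2)} := by
  ext ⟨n₁, n₂⟩
  simp only [Set.mem_range, Set.mem_ofPred_eq, Prod.ext_iff]
  constructor
  · rintro ⟨⟨m, k⟩, h₁, h₂⟩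
    exact ⟨m, by omega⟩
  · rintro ⟨j, hj⟩
    exact ⟨((n₁ + n₂) / 2, (n₁ - n₂) / 2), by omega, by omega⟩

lemma Int.range_add_add_one_sub :
    Set.range (fun p : ℤ × ℤ => (p.1 + p.2 + 1, p.1 - p.2)) = {q | Odd (q.1 + q.2)} := by
  ext ⟨n₁, n₂⟩
  simp only [Set.mem_range, Set.mem_ofPred_eq, Prod.ext_iff]
  constructor
  · rintro ⟨⟨m, k⟩, h₁, h₂⟩
    exact ⟨m, by omega⟩
  · rintro ⟨j, hj⟩
    exact ⟨((n₁ + n₂ - 1) / 2, (n₁ - n₂) / 2), by omega, by omega⟩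

lemma HasSum.int_prod_even_add_odd {M : Type*} [AddCommMonoid M] [TopologicalSpace M]
    [ContinuousAdd M] {f : ℤ × ℤ → M} {a b : M}
    (he : HasSum (fun p : ℤ × ℤ => f (p.1 + p.2, p.1 - p.2)) a)
    (ho : HasSum (fun p : ℤ × ℤ => f (p.1 + p.2 + 1, p.1 - p.2)) b) :
    HasSum f (a + b) := by
  have hinj_e : Function.Injective fun p : ℤ × ℤ => (p.1 + p.2, p.1 - p.2) := by
    intro p q h
    simp only [Prod.ext_iff] at h ⊢
    omega
  have hinj_o : Function.Injective fun p : ℤ × ℤ => (p.1 + p.2 + 1, p.1 - p.2) := by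
    intro p q h
    simp only [Prod.ext_iff] at h ⊢
    omega
  refine (hinj_e.hasSum_range_iff.mpr he).add_isCompl ?_ (hinj_o.hasSum_range_iff.mpr ho)
  rw [Int.range_add_sub, Int.range_add_add_one_sub]
  exact Int.isCompl_even_odd.preimage fun q : ℤ × ℤ => q.1 + q.2

/-- The addition (product) formula:
`θ[α₁;0](x₁|τ)·θ[α₂;0](x₂|τ) = θ[α₊;0](x₊|2τ)·θ[α₋;0](x₋|2τ)
 + θ[α₊+1/2;0](x₊|2τ)·θ[α₋+1/2;0](x₋|2τ)`,
with `α_± = (α₁ ± α₂)/2` and `x_± = x₁ ± x₂`. -/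
theorem thetaChar_product_formula (τ : ℂ) (hτ : 0 < τ.im) (α₁ α₂ x₁ x₂ : ℂ) :
    thetaChar τ α₁ 0 x₁ * thetaChar τ α₂ 0 x₂ =
      thetaChar (2 * τ) ((α₁ + α₂) / 2) 0 (x₁ + x₂)
        * thetaChar (2 * τ) ((α₁ - α₂) / 2) 0 (x₁ - x₂)
      + thetaChar (2 * τ) ((α₁ + α₂) / 2 + 1 / 2) 0 (x₁ + x₂)
        * thetaChar (2 * τ) ((α₁ - α₂) / 2 + 1 / 2) 0 (x₁ - x₂) := by
  have h2τ : 0 < (2 * τ).im := by simpa using hτ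
  refine (hasSum_thetaCharTerm_mul_thetaCharTerm hτ α₁ α₂ x₁ x₂).unique
    (HasSum.int_prod_even_add_odd ?_ ?_)
  · simpa only [thetaCharTerm_add_mul_thetaCharTerm_sub] using
      hasSum_thetaCharTerm_mul_thetaCharTerm h2τ _ _ (x₁ + x₂) (x₁ - x₂)
  · simpa only [thetaCharTerm_add_add_one_mul_thetaCharTerm_sub] using
      hasSum_thetaCharTerm_mul_thetaCharTerm h2τ _ _ (x₁ + x₂) (x₁ - x₂)
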